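/- arXiv:2201.04012 — 2 statements merged into one kernel-verified Lean document; each statement's English description precedes it below -/
import Mathlib

section
/- (Inter-robot probabilistic collision freedom) Let p_i ~ N(p̂_i, Σ_i) and p_j ~ N(p̂_j, Σ_j) be independent Gaussian random vectors in ℝ^d with positive-definite covariances. Let a ∈ ℝ^d be nonzero, b ∈ ℝ, r_s > 0, 0 < δ < 3/4, and β_i = √(2aᵀΣ_i a)·erf⁻¹(2√(1-δ)-1), β_j = √(2aᵀΣ_j a)·erf⁻¹(2√(1-δ)-1). If aᵀp̂_i ≤ b - r_s‖a‖ - β_i and aᵀp̂_j ≥ b + r_s‖a‖ + β_j, then Pr(‖p_i - p_j‖ ≥ 2r_s) ≥ 1 - δ. -/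
open MeasureTheory Matrix ProbabilityTheory

/-- The Gauss error function `erf(z) = (2/√π) ∫₀^z e^{-t²} dt`. -/
noncomputable def erf (z : ℝ) : ℝ :=
  (2 / Real.sqrt Real.pi) * ∫ t in (0:ℝ)..z, Real.exp (-t ^ 2)

lemma erf_nonpos {z : ℝ} (hz : z ≤ 0) : erf z ≤ 0 := by
  have h : (0:ℝ) ≤ ∫ t in z..(0:ℝ), Real.exp (-t ^ 2) :=
    intervalIntegral.integral_nonneg hz (fun t _ => (Real.exp_pos _).le)
  have h2 : ∫ t in (0:ℝ)..z, Real.exp (-t ^ 2) ≤ 0 := by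
    rw [intervalIntegral.integral_symm]; linarith
  have hπ : 0 < Real.sqrt Real.pi := Real.sqrt_pos.mpr Real.pi_pos
  have : (0:ℝ) ≤ 2 / Real.sqrt Real.pi := by positivity
  exact mul_nonpos_of_nonneg_of_nonpos this h2

lemma gauss_reflect (m : ℝ) (v : NNReal) :
    (gaussianReal m v).map (fun x => 2 * m - x) = gaussianReal m v := by
  have h1 : (fun x : ℝ => 2 * m - x) = (fun x => x + 2 * m) ∘ (fun x => (-1 : ℝ) * x) := by
    funext x; simp [Function.comp]; ring
  rw [h1, ← Measure.map_map (by fun_prop) (by fun_prop)]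
  rw [gaussianReal_map_const_mul, gaussianReal_map_add_const]
  congr 1
  · ring
  · ext; norm_num

lemma gauss_singleton (m x : ℝ) {v : NNReal} (hv : v ≠ 0) : gaussianReal m v {x} = 0 :=
  gaussianReal_absolutelyContinuous m hv (measure_singleton x)

lemma gauss_Iic_self (m : ℝ) {v : NNReal} (hv : v ≠ 0) :
    gaussianReal m v (Set.Iic m) = 1/2 := by
  have hmeas : Measurable (fun x : ℝ => 2 * m - x) := by fun_prop
  have hpre : (fun x : ℝ => 2 * m - x) ⁻¹' (Set.Iic m) = Set.Ici m := by
    ext x; simp only [Set.mem_preimage, Set.mem_Iic, Set.mem_Ici]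
    constructor <;> intro <;> linarith
  have h1 : gaussianReal m v (Set.Iic m) = gaussianReal m v (Set.Ici m) := by
    conv_lhs => rw [← gauss_reflect m v]
    rw [Measure.map_apply hmeas measurableSet_Iic, hpre]
  have h2 : gaussianReal m v (Set.Iic m ∪ Set.Ici m)
        + gaussianReal m v (Set.Iic m ∩ Set.Ici m)
      = gaussianReal m v (Set.Iic m) + gaussianReal m v (Set.Ici m) :=
    measure_union_add_inter _ measurableSet_Ici
  rw [Set.Iic_union_Ici, Set.Iic_inter_Ici, Set.Icc_self] at h2
  have h3 : gaussianReal m v (Set.univ : Set ℝ) = 1 := measure_univ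
  have h4 : gaussianReal m v {m} = 0 := gauss_singleton m m hv
  rw [h3, h4, add_zero, ← h1, ← two_mul] at h2
  rw [ENNReal.eq_div_iff two_ne_zero (by norm_num)]
  exact h2.symm

set_option maxHeartbeats 800000 in
lemma gauss_Ioc (m : ℝ) {v : NNReal} (hv : v ≠ 0) {z : ℝ} (hz : 0 ≤ z) :
    (gaussianReal m v (Set.Ioc m (m + Real.sqrt (2 * v) * z))).toReal = erf z / 2 := by
  have hvpos : (0:ℝ) < (v:ℝ) := by positivity
  set s := Real.sqrt (2 * (v:ℝ)) with hs
  have hspos : 0 < s := Real.sqrt_pos.mpr (by positivity)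
  have hc : 0 ≤ s * z := mul_nonneg hspos.le hz
  rw [gaussianReal_apply_eq_integral _ hv, ENNReal.toReal_ofReal
    (setIntegral_nonneg measurableSet_Ioc fun x _ => gaussianPDFReal_nonneg _ _ _)]
  rw [← intervalIntegral.integral_of_le (by linarith)]
  have hpdf : ∀ x : ℝ, gaussianPDFReal m v x
      = (Real.sqrt (2 * Real.pi * v))⁻¹ * Real.exp (-(x - m)^2 / (2 * v)) := fun x => rfl
  simp_rw [hpdf]
  rw [show (∫ x in m..(m + s * z),
        (Real.sqrt (2 * Real.pi * v))⁻¹ * Real.exp (-(x - m)^2 / (2 * v)))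
      = ∫ x in (m - m)..(m + s * z - m),
        (Real.sqrt (2 * Real.pi * v))⁻¹ * Real.exp (-x^2 / (2 * v)) from
    (intervalIntegral.integral_comp_sub_right
      (fun x => (Real.sqrt (2 * Real.pi * v))⁻¹ * Real.exp (-x^2 / (2 * v))) m)]
  have h0 : m - m = s * 0 := by ring
  have h1 : m + s * z - m = s * z := by ring
  rw [h0, h1, ← intervalIntegral.smul_integral_comp_mul_left
      (fun x => (Real.sqrt (2 * Real.pi * v))⁻¹ * Real.exp (-x^2 / (2 * v))) s]
  have hsq : ∀ x : ℝ, -(s * x)^2 / (2 * v) = -x^2 := by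
    intro x
    have : s ^ 2 = 2 * (v:ℝ) := Real.sq_sqrt (by positivity)
    field_simp [mul_pow, this]
    linear_combination (-x^2) * this
  simp_rw [hsq]
  rw [intervalIntegral.integral_const_mul, smul_eq_mul]
  have hsplitpi : Real.sqrt (2 * Real.pi * v) = Real.sqrt Real.pi * s := by
    rw [hs, ← Real.sqrt_mul Real.pi_pos.le]
    ring_nf
  rw [hsplitpi, erf]
  have hπ : 0 < Real.sqrt Real.pi := Real.sqrt_pos.mpr Real.pi_pos
  field_simp

lemma gauss_Iic (m : ℝ) {v : NNReal} (hv : v ≠ 0) {z : ℝ} (hz : 0 ≤ z) :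
    (gaussianReal m v (Set.Iic (m + Real.sqrt (2 * v) * z))).toReal = 1/2 + erf z / 2 := by
  have hc : 0 ≤ Real.sqrt (2 * (v:ℝ)) * z := mul_nonneg (Real.sqrt_nonneg _) hz
  have hsplit : Set.Iic (m + Real.sqrt (2 * v) * z)
      = Set.Iic m ∪ Set.Ioc m (m + Real.sqrt (2 * v) * z) :=
    (Set.Iic_union_Ioc_eq_Iic (by linarith)).symm
  rw [hsplit, measure_union (Set.Iic_disjoint_Ioc le_rfl) measurableSet_Ioc,
    ENNReal.toReal_add (measure_ne_top _ _) (measure_ne_top _ _),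
    gauss_Iic_self m hv, gauss_Ioc m hv hz]
  simp

lemma gauss_Ici (m : ℝ) {v : NNReal} (hv : v ≠ 0) {z : ℝ} (hz : 0 ≤ z) :
    (gaussianReal m v (Set.Ici (m - Real.sqrt (2 * v) * z))).toReal = 1/2 + erf z / 2 := by
  have hmeas : Measurable (fun x : ℝ => 2 * m - x) := by fun_prop
  have hpre : (fun x : ℝ => 2 * m - x) ⁻¹' (Set.Ici (m - Real.sqrt (2 * v) * z))
      = Set.Iic (m + Real.sqrt (2 * v) * z) := by
    ext x; simp only [Set.mem_preimage, Set.mem_Ici, Set.mem_Iic]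
    constructor <;> intro <;> linarith
  have : gaussianReal m v (Set.Ici (m - Real.sqrt (2 * v) * z))
      = gaussianReal m v (Set.Iic (m + Real.sqrt (2 * v) * z)) := by
    conv_lhs => rw [← gauss_reflect m v]
    rw [Measure.map_apply hmeas measurableSet_Ici, hpre]
  rw [this, gauss_Iic m hv hz]

/-- **Inter-robot probabilistic collision freedom.** -/
theorem stmt6 {Ω : Type*} [MeasurableSpace Ω] (μ : Measure Ω) [IsProbabilityMeasure μ]
    (d : ℕ) (Si Sj : Matrix (Fin d) (Fin d) ℝ) (hSi : Si.PosDef) (hSj : Sj.PosDef)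
    (pihat pjhat : Fin d → ℝ) (pI pJ : Ω → (Fin d → ℝ))
    (a : Fin d → ℝ) (ha : a ≠ 0) (b rs δ : ℝ) (hrs : 0 < rs) (hδ0 : 0 < δ) (hδ1 : δ < 3 / 4)
    (erfInv : ℝ → ℝ)
    (herfInv : ∀ y ∈ Set.Ioo (-1 : ℝ) 1, erf (erfInv y) = y)
    -- `pᵢ ~ N(p̂ᵢ, Σᵢ)` and `pⱼ ~ N(p̂ⱼ, Σⱼ)`
    (hGaussI : Measure.map (fun ω => a ⬝ᵥ pI ω) μ
      = gaussianReal (a ⬝ᵥ pihat) (Real.toNNReal (a ⬝ᵥ (Si *ᵥ a))))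
    (hGaussJ : Measure.map (fun ω => a ⬝ᵥ pJ ω) μ
      = gaussianReal (a ⬝ᵥ pjhat) (Real.toNNReal (a ⬝ᵥ (Sj *ᵥ a))))
    -- `pᵢ` and `pⱼ` are independent
    (hIndep : IndepFun pI pJ μ)
    (hmeanI : a ⬝ᵥ pihat ≤ b - rs * Real.sqrt (a ⬝ᵥ a)
      - Real.sqrt (2 * (a ⬝ᵥ (Si *ᵥ a))) * erfInv (2 * Real.sqrt (1 - δ) - 1))
    (hmeanJ : b + rs * Real.sqrt (a ⬝ᵥ a)
      + Real.sqrt (2 * (a ⬝ᵥ (Sj *ᵥ a))) * erfInv (2 * Real.sqrt (1 - δ) - 1) ≤ a ⬝ᵥ pjhat) :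
    1 - δ ≤ (μ {ω | 2 * rs ≤ Real.sqrt ((pI ω - pJ ω) ⬝ᵥ (pI ω - pJ ω))}).toReal := by
  -- setup
  have hδ' : (0:ℝ) < 1 - δ := by linarith
  set y : ℝ := 2 * Real.sqrt (1 - δ) - 1 with hy
  have hsqrt_pos : (1:ℝ)/2 < Real.sqrt (1 - δ) := by
    have h := Real.sqrt_lt_sqrt (by norm_num : (0:ℝ) ≤ 1/4) (by linarith : (1:ℝ)/4 < 1 - δ)
    rwa [show (1:ℝ)/4 = (1/2)^2 by norm_num, Real.sqrt_sq (by norm_num)] at h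
  have hsqrt_lt1 : Real.sqrt (1 - δ) < 1 := by
    have h := Real.sqrt_lt_sqrt (by linarith : (0:ℝ) ≤ 1 - δ) (by linarith : 1 - δ < 1)
    rwa [Real.sqrt_one] at h
  have hy_mem : y ∈ Set.Ioo (-1:ℝ) 1 := ⟨by simp only [hy]; linarith, by simp only [hy]; linarith⟩
  have herf : erf (erfInv y) = y := herfInv y hy_mem
  have hy_pos : 0 < y := by simp only [hy]; linarith
  set z : ℝ := erfInv y with hz
  have hz_nonneg : 0 ≤ z := by
    by_contra h
    push_neg at h
    have := erf_nonpos h.le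
    rw [herf] at this; linarith
  -- variances
  have hvi : 0 < a ⬝ᵥ (Si *ᵥ a) := by
    have := hSi.dotProduct_mulVec_pos ha
    simpa using this
  have hvj : 0 < a ⬝ᵥ (Sj *ᵥ a) := by
    have := hSj.dotProduct_mulVec_pos ha
    simpa using this
  set vi : NNReal := Real.toNNReal (a ⬝ᵥ (Si *ᵥ a)) with hvi_def
  set vj : NNReal := Real.toNNReal (a ⬝ᵥ (Sj *ᵥ a)) with hvj_def
  have hvi0 : vi ≠ 0 := by simp [hvi_def, Real.toNNReal_eq_zero, not_le, hvi]
  have hvj0 : vj ≠ 0 := by simp [hvj_def, Real.toNNReal_eq_zero, not_le, hvj]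
  have hvic : ((vi:ℝ)) = a ⬝ᵥ (Si *ᵥ a) := Real.coe_toNNReal _ hvi.le
  have hvjc : ((vj:ℝ)) = a ⬝ᵥ (Sj *ᵥ a) := Real.coe_toNNReal _ hvj.le
  -- thresholds
  set na : ℝ := Real.sqrt (a ⬝ᵥ a) with hna
  set t1 : ℝ := b - rs * na with ht1
  set t2 : ℝ := b + rs * na with ht2
  -- measurability of the linear functional
  have hlin : Measurable (fun p : Fin d → ℝ => a ⬝ᵥ p) := by
    unfold dotProduct
    exact Finset.measurable_sum _ fun i _ => (measurable_pi_apply i).const_mul _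
  have hSA : MeasurableSet {p : Fin d → ℝ | a ⬝ᵥ p ≤ t1} :=
    measurableSet_le hlin measurable_const
  have hSB : MeasurableSet {p : Fin d → ℝ | t2 ≤ a ⬝ᵥ p} :=
    measurableSet_le measurable_const hlin
  -- ae-measurability
  have hmI : AEMeasurable (fun ω => a ⬝ᵥ pI ω) μ := by
    apply aemeasurable_of_map_neZero
    rw [hGaussI]; infer_instance
  have hmJ : AEMeasurable (fun ω => a ⬝ᵥ pJ ω) μ := by
    apply aemeasurable_of_map_neZero
    rw [hGaussJ]; infer_instance
  -- probability bounds for each event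
  have hq : 1/2 + erf z / 2 = Real.sqrt (1 - δ) := by rw [herf]; simp only [hy]; ring
  have hA : Real.sqrt (1 - δ) ≤ (μ (pI ⁻¹' {p | a ⬝ᵥ p ≤ t1})).toReal := by
    have hpre : pI ⁻¹' {p | a ⬝ᵥ p ≤ t1} = (fun ω => a ⬝ᵥ pI ω) ⁻¹' (Set.Iic t1) := rfl
    rw [hpre, ← Measure.map_apply_of_aemeasurable hmI measurableSet_Iic, hGaussI]
    have hmono : gaussianReal (a ⬝ᵥ pihat) vi (Set.Iic (a ⬝ᵥ pihat + Real.sqrt (2 * vi) * z))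
        ≤ gaussianReal (a ⬝ᵥ pihat) vi (Set.Iic t1) := by
      apply measure_mono
      apply Set.Iic_subset_Iic.mpr
      rw [hvic]
      simp only [ht1]
      linarith
    calc Real.sqrt (1 - δ)
        = (gaussianReal (a ⬝ᵥ pihat) vi
            (Set.Iic (a ⬝ᵥ pihat + Real.sqrt (2 * vi) * z))).toReal := by
          rw [gauss_Iic _ hvi0 hz_nonneg, hq]
      _ ≤ _ := ENNReal.toReal_mono (measure_ne_top _ _) hmono
  have hB : Real.sqrt (1 - δ) ≤ (μ (pJ ⁻¹' {p | t2 ≤ a ⬝ᵥ p})).toReal := by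
    have hpre : pJ ⁻¹' {p | t2 ≤ a ⬝ᵥ p} = (fun ω => a ⬝ᵥ pJ ω) ⁻¹' (Set.Ici t2) := rfl
    rw [hpre, ← Measure.map_apply_of_aemeasurable hmJ measurableSet_Ici, hGaussJ]
    have hmono : gaussianReal (a ⬝ᵥ pjhat) vj (Set.Ici (a ⬝ᵥ pjhat - Real.sqrt (2 * vj) * z))
        ≤ gaussianReal (a ⬝ᵥ pjhat) vj (Set.Ici t2) := by
      apply measure_mono
      apply Set.Ici_subset_Ici.mpr
      rw [hvjc]
      simp only [ht2]
      linarith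
    calc Real.sqrt (1 - δ)
        = (gaussianReal (a ⬝ᵥ pjhat) vj
            (Set.Ici (a ⬝ᵥ pjhat - Real.sqrt (2 * vj) * z))).toReal := by
          rw [gauss_Ici _ hvj0 hz_nonneg, hq]
      _ ≤ _ := ENNReal.toReal_mono (measure_ne_top _ _) hmono
  -- independence
  have hprod : μ (pI ⁻¹' {p | a ⬝ᵥ p ≤ t1} ∩ pJ ⁻¹' {p | t2 ≤ a ⬝ᵥ p})
      = μ (pI ⁻¹' {p | a ⬝ᵥ p ≤ t1}) * μ (pJ ⁻¹' {p | t2 ≤ a ⬝ᵥ p}) :=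
    hIndep.measure_inter_preimage_eq_mul _ _ hSA hSB
  -- deterministic implication
  have haa : 0 < a ⬝ᵥ a := by
    rcases Function.ne_iff.mp ha with ⟨i, hi⟩
    have h1 : (0:ℝ) < ∑ k, a k * a k :=
      Finset.sum_pos' (fun k _ => mul_self_nonneg _)
        ⟨i, Finset.mem_univ i, mul_self_pos.mpr hi⟩
    simpa [dotProduct] using h1
  have hna_pos : 0 < na := Real.sqrt_pos.mpr haa
  have hsub : pI ⁻¹' {p | a ⬝ᵥ p ≤ t1} ∩ pJ ⁻¹' {p | t2 ≤ a ⬝ᵥ p}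
      ⊆ {ω | 2 * rs ≤ Real.sqrt ((pI ω - pJ ω) ⬝ᵥ (pI ω - pJ ω))} := by
    rintro ω ⟨h1, h2⟩
    simp only [Set.mem_preimage, Set.mem_setOf_eq] at h1 h2 ⊢
    set w : Fin d → ℝ := pI ω - pJ ω with hw
    have hdot : a ⬝ᵥ w = a ⬝ᵥ pI ω - a ⬝ᵥ pJ ω := by
      simp [hw, dotProduct, mul_sub, Finset.sum_sub_distrib]
    have hle : a ⬝ᵥ w ≤ -(2 * rs * na) := by
      rw [hdot]; simp only [ht1, ht2] at h1 h2; linarith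
    have hCS : (a ⬝ᵥ w)^2 ≤ (a ⬝ᵥ a) * (w ⬝ᵥ w) := by
      have := Finset.sum_mul_sq_le_sq_mul_sq Finset.univ a w
      simpa [dotProduct, sq, Finset.sum_mul, mul_pow] using this
    have hnn : 0 ≤ 2 * rs * na := by positivity
    have hsq1 : (2 * rs * na)^2 ≤ (a ⬝ᵥ w)^2 := by
      have h3 : 2 * rs * na ≤ -(a ⬝ᵥ w) := by linarith
      calc (2 * rs * na)^2 ≤ (-(a ⬝ᵥ w))^2 := by
            apply pow_le_pow_left₀ hnn h3
        _ = (a ⬝ᵥ w)^2 := by ring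
    have hna2 : na^2 = a ⬝ᵥ a := Real.sq_sqrt haa.le
    have hkey : (2 * rs)^2 * (a ⬝ᵥ a) ≤ (a ⬝ᵥ a) * (w ⬝ᵥ w) := by
      calc (2 * rs)^2 * (a ⬝ᵥ a) = (2 * rs * na)^2 := by
            rw [mul_pow (2 * rs) na, hna2]
        _ ≤ (a ⬝ᵥ w)^2 := hsq1
        _ ≤ (a ⬝ᵥ a) * (w ⬝ᵥ w) := hCS
    have hfin : (2 * rs)^2 ≤ w ⬝ᵥ w := by
      have := (mul_le_mul_iff_of_pos_right haa).mp (by linarith [hkey] : (2*rs)^2 * (a ⬝ᵥ a) ≤ (w ⬝ᵥ w) * (a ⬝ᵥ a))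
      linarith
    exact (Real.le_sqrt (by positivity) (by nlinarith)).mpr hfin
  -- conclusion
  have hmono := ENNReal.toReal_mono (measure_ne_top μ _) (measure_mono hsub)
  rw [hprod, ENNReal.toReal_mul] at hmono
  have hss : Real.sqrt (1 - δ) * Real.sqrt (1 - δ) = 1 - δ := Real.mul_self_sqrt hδ'.le
  have hsnn : 0 ≤ Real.sqrt (1 - δ) := Real.sqrt_nonneg _
  calc 1 - δ = Real.sqrt (1 - δ) * Real.sqrt (1 - δ) := hss.symm
    _ ≤ (μ (pI ⁻¹' {p | a ⬝ᵥ p ≤ t1})).toReal * (μ (pJ ⁻¹' {p | t2 ≤ a ⬝ᵥ p})).toReal := by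
        apply mul_le_mul hA hB hsnn (ENNReal.toReal_nonneg)
    _ ≤ _ := hmono
end

section
/- Let p_1, …, p_n ∈ ℝ^d and r_s > 0, and define the buffered Voronoi cells V_i^b = { p : (p_j - p_i)ᵀ p ≤ (p_j - p_i)ᵀ(p_i + p_j)/2 - r_s‖p_j - p_i‖, ∀ j ≠ i }. If q_i ∈ V_i^b and q_j ∈ V_j^b for i ≠ j, then ‖q_i - q_j‖ ≥ 2 r_s. In particular, distinct buffered Voronoi cells are at distance at least 2r_s from each other. -/
open RealInnerProductSpace

/-- Let `p₁, …, pₙ ∈ ℝᵈ` be distinct, `r_s > 0`, and define the buffered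
Voronoi cells `Vᵢᵇ = { p : (pⱼ - pᵢ)ᵀ p ≤ (pⱼ - pᵢ)ᵀ(pᵢ + pⱼ)/2 - r_s‖pⱼ - pᵢ‖, ∀ j ≠ i }`.
If `qᵢ ∈ Vᵢᵇ` and `qⱼ ∈ Vⱼᵇ` for `i ≠ j`, then `‖qᵢ - qⱼ‖ ≥ 2 r_s`. -/
theorem stmt11 {d n : ℕ} (p : Fin n → EuclideanSpace ℝ (Fin d))
    (hdist : Function.Injective p) (rs : ℝ) (hrs : 0 < rs)
    (i j : Fin n) (hij : i ≠ j)
    (qi qj : EuclideanSpace ℝ (Fin d))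
    (hqi : ∀ k, k ≠ i →
      ⟪p k - p i, qi⟫ ≤ ⟪p k - p i, (1 / 2 : ℝ) • (p i + p k)⟫ - rs * ‖p k - p i‖)
    (hqj : ∀ k, k ≠ j →
      ⟪p k - p j, qj⟫ ≤ ⟪p k - p j, (1 / 2 : ℝ) • (p j + p k)⟫ - rs * ‖p k - p j‖) :
    2 * rs ≤ ‖qi - qj‖ := by
  have h1 := hqi j hij.symm
  have h2 := hqj i hij
  have hv : p j - p i ≠ 0 := sub_ne_zero.2 (fun h => hij.symm (hdist h))
  have hnv : 0 < ‖p j - p i‖ := norm_pos_iff.2 hv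
  have hnorm : ‖p i - p j‖ = ‖p j - p i‖ := norm_sub_rev _ _
  have hkey : 2 * rs * ‖p j - p i‖ ≤ ⟪p j - p i, qj - qi⟫ := by
    have e1 : ⟪p i - p j, qj⟫ = -⟪p j - p i, qj⟫ := by
      rw [← inner_neg_left, neg_sub]
    have e2 : ⟪p i - p j, (1 / 2 : ℝ) • (p j + p i)⟫
        = -⟪p j - p i, (1 / 2 : ℝ) • (p j + p i)⟫ := by
      rw [← inner_neg_left, neg_sub]
    have e3 : ⟪p j - p i, (1 / 2 : ℝ) • (p i + p j)⟫
        = ⟪p j - p i, (1 / 2 : ℝ) • (p j + p i)⟫ := by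
      rw [add_comm]
    rw [hnorm, e1, e2] at h2
    rw [e3] at h1
    rw [inner_sub_right]
    linarith
  have hcs : ⟪p j - p i, qj - qi⟫ ≤ ‖p j - p i‖ * ‖qj - qi‖ :=
    real_inner_le_norm _ _
  have : 2 * rs * ‖p j - p i‖ ≤ ‖p j - p i‖ * ‖qj - qi‖ := le_trans hkey hcs
  have h4 : 2 * rs ≤ ‖qj - qi‖ := by
    nlinarith
  rwa [norm_sub_rev] at h4
end
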